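/- Let A be a positive definite symmetric d×d real matrix, b ∈ ℝ^d, x_0 ∈ ℝ^d, and G_0 ⪰ A symmetric. Define recursively: x_{k+1} := x_k − G_k⁻¹(A x_k − b); L_k an invertible matrix with L_kᵀ L_k = G_k⁻¹; ũ_k a standard basis vector maximizing eᵀ L_k⁻ᵀ A⁻¹ L_k⁻¹ e over e ∈ {e_1, …, e_d}; and G_{k+1} := BFGS(G_k, A, L_kᵀ ũ_k). Then for every k ≥ 0: λ_f(x_{k+1}) ≤ (1 − 1/d)^k · σ_A(G_0) · λ_f(x_k). -/

import Mathlib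

open Matrix

/-- `σ_A(G) = tr((G - A) A⁻¹)`. -/
noncomputable def sigmaA {d : ℕ} (A G : Matrix (Fin d) (Fin d) ℝ) : ℝ :=
  ((G - A) * A⁻¹).trace

/-- The BFGS quasi-Newton update. -/
noncomputable def BFGS {d : ℕ} (G A : Matrix (Fin d) (Fin d) ℝ) (u : Fin d → ℝ) :
    Matrix (Fin d) (Fin d) ℝ :=
  if u = 0 then G
  else G - (u ⬝ᵥ (G *ᵥ u))⁻¹ • vecMulVec (G *ᵥ u) (u ᵥ* G)
         + (u ⬝ᵥ (A *ᵥ u))⁻¹ • vecMulVec (A *ᵥ u) (u ᵥ* A)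

/-- `λ_f(x) = sqrt((Ax - b)ᵀ A⁻¹ (Ax - b))` for the quadratic `f(x) = ½ xᵀAx - bᵀx`. -/
noncomputable def lambdaF {d : ℕ} (A : Matrix (Fin d) (Fin d) ℝ) (b x : Fin d → ℝ) : ℝ :=
  Real.sqrt ((A *ᵥ x - b) ⬝ᵥ (A⁻¹ *ᵥ (A *ᵥ x - b)))

/-!
Write `g = A x - b` and `D = A⁻¹ - G⁻¹`, which is positive semidefinite when `A ⪯ G`. The step
`x⁺ = x - G⁻¹ g` has gradient `A D g`, so `λ_f(x⁺)² = (D g)ᵀ A (D g) ≤ tr(D A)² λ_f(x)²` (factor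
`A = BᵀB` and use `N² ⪯ (tr N)² I` for `N = B D Bᵀ ⪰ 0`), and `tr(D A) ≤ σ_A(G)` because
`σ_A(G) - tr(D A) = tr((G - A) D) ≥ 0`.

The BFGS update keeps `A ⪯ G` and changes `σ_A` by `1 - (Gu)ᵀ A⁻¹ (Gu) / uᵀ G u`. For `u = Lᵀ eᵢ`
the denominator is `1` and the numerator is the `i`-th diagonal entry of `L⁻ᵀ A⁻¹ L⁻¹`, a matrix of
trace `tr(G A⁻¹) = σ_A(G) + d`; the greedy choice of `i` therefore contracts `σ_A` by `1 - 1/d`.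
-/

namespace Matrix

theorem PosDef.of_posSemidef_sub {n : Type*} {A G : Matrix n n ℝ} (hA : A.PosDef)
    (hGA : (G - A).PosSemidef) : G.PosDef := by
  simpa using hA.add_posSemidef hGA

variable {m n : Type*} [Fintype m] [Fintype n]

theorem mulVec_dotProduct_mulVec_le_trace_mul (C : Matrix m n ℝ) (y : n → ℝ) :
    C *ᵥ y ⬝ᵥ C *ᵥ y ≤ (Cᵀ * C).trace * (y ⬝ᵥ y) := by
  have hrow (i : m) : (C *ᵥ y) i * (C *ᵥ y) i ≤ (∑ j, C i j ^ 2) * (y ⬝ᵥ y) := by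
    simpa [mulVec, dotProduct, sq] using Finset.sum_mul_sq_le_sq_mul_sq Finset.univ (C i) y
  have htrace : (Cᵀ * C).trace = ∑ i, ∑ j, C i j ^ 2 := by
    simp only [trace, diag_apply, mul_apply, transpose_apply, sq]
    exact Finset.sum_comm
  rw [htrace, Finset.sum_mul]
  exact Finset.sum_le_sum fun i _ => hrow i

theorem dotProduct_transpose_mul_self_mulVec (B : Matrix m n ℝ) (y : n → ℝ) :
    y ⬝ᵥ (Bᵀ * B) *ᵥ y = B *ᵥ y ⬝ᵥ B *ᵥ y := by
  rw [← mulVec_mulVec, dotProduct_mulVec, vecMul_transpose]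

theorem IsSymm.dotProduct_mulVec {M : Matrix n n ℝ} (hM : M.IsSymm) (x y : n → ℝ) :
    x ⬝ᵥ M *ᵥ y = M *ᵥ x ⬝ᵥ y := by
  rw [Matrix.dotProduct_mulVec, ← mulVec_transpose, hM.eq]

theorem trace_le_card_mul_of_diag_le {M : Matrix n n ℝ} {i : n} (h : ∀ j, M j j ≤ M i i) :
    M.trace ≤ Fintype.card n * M i i :=
  calc M.trace = ∑ j, M j j := rfl
    _ ≤ ∑ _j : n, M i i := Finset.sum_le_sum fun j _ => h j
    _ = Fintype.card n * M i i := by simp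

open scoped MatrixOrder in
theorem PosSemidef.exists_eq_transpose_mul_self {N : Matrix n n ℝ} (hN : N.PosSemidef) :
    ∃ B : Matrix n n ℝ, N = Bᵀ * B := by
  classical
  obtain ⟨B, hB⟩ := CStarAlgebra.nonneg_iff_eq_star_mul_self.mp hN.nonneg
  exact ⟨B, by rwa [star_eq_conjTranspose, conjTranspose_eq_transpose_of_trivial] at hB⟩

theorem PosSemidef.dotProduct_mulVec_le_trace_mul {N : Matrix n n ℝ} (hN : N.PosSemidef)
    (y : n → ℝ) : y ⬝ᵥ N *ᵥ y ≤ N.trace * (y ⬝ᵥ y) := by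
  obtain ⟨B, rfl⟩ := hN.exists_eq_transpose_mul_self
  rw [dotProduct_transpose_mul_self_mulVec]
  exact mulVec_dotProduct_mulVec_le_trace_mul B y

theorem PosSemidef.mulVec_dotProduct_mulVec_le_trace_sq_mul {N : Matrix n n ℝ}
    (hN : N.PosSemidef) (y : n → ℝ) : N *ᵥ y ⬝ᵥ N *ᵥ y ≤ N.trace ^ 2 * (y ⬝ᵥ y) := by
  obtain ⟨B, rfl⟩ := hN.exists_eq_transpose_mul_self
  have hBBt : (B * Bᵀ).PosSemidef := by simpa using posSemidef_self_mul_conjTranspose B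
  calc (Bᵀ * B) *ᵥ y ⬝ᵥ (Bᵀ * B) *ᵥ y = B *ᵥ y ⬝ᵥ (B * Bᵀ) *ᵥ (B *ᵥ y) := by
        rw [← mulVec_mulVec, ← mulVec_mulVec, dotProduct_comm, dotProduct_mulVec,
          vecMul_transpose, mulVec_mulVec, dotProduct_comm]
    _ ≤ (B * Bᵀ).trace * (B *ᵥ y ⬝ᵥ B *ᵥ y) := hBBt.dotProduct_mulVec_le_trace_mul _
    _ ≤ (Bᵀ * B).trace * ((Bᵀ * B).trace * (y ⬝ᵥ y)) := by
        rw [trace_mul_comm]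
        exact mul_le_mul_of_nonneg_left (mulVec_dotProduct_mulVec_le_trace_mul B y)
          hN.trace_nonneg
    _ = (Bᵀ * B).trace ^ 2 * (y ⬝ᵥ y) := by ring

theorem PosSemidef.trace_mul_nonneg {P Q : Matrix n n ℝ} (hP : P.PosSemidef)
    (hQ : Q.PosSemidef) : 0 ≤ (P * Q).trace := by
  obtain ⟨B, rfl⟩ := hP.exists_eq_transpose_mul_self
  rw [Matrix.mul_assoc, trace_mul_comm, Matrix.mul_assoc]
  simpa [Matrix.mul_assoc] using (hQ.mul_mul_conjTranspose_same B).trace_nonneg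

theorem PosDef.posSemidef_inv_sub_inv [DecidableEq n] {A G : Matrix n n ℝ} (hA : A.PosDef)
    (hGA : (G - A).PosSemidef) : (A⁻¹ - G⁻¹).PosSemidef := by
  have hG := hA.of_posSemidef_sub hGA
  have hE : (G - A)ᵀ = G - A := by simpa using hGA.isHermitian.eq
  have hGinv : (G⁻¹)ᵀ = G⁻¹ := by simpa using hG.inv.isHermitian.eq
  have := hA.isUnit.invertible
  have := hG.isUnit.invertible
  have hconj := ((hA.inv.posSemidef.conjTranspose_mul_mul_same (G - A)).add hGA)
    |>.conjTranspose_mul_mul_same G⁻¹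
  rw [conjTranspose_eq_transpose_of_trivial, conjTranspose_eq_transpose_of_trivial, hE,
    hGinv] at hconj
  have hid : G⁻¹ * ((G - A) * A⁻¹ * (G - A) + (G - A)) * G⁻¹ = A⁻¹ - G⁻¹ := by
    simp only [mul_sub, sub_mul, mul_add, add_mul, Matrix.mul_assoc,
      inv_mul_cancel_left_of_invertible, mul_inv_of_invertible, inv_mul_of_invertible,
      Matrix.mul_one, Matrix.one_mul]
    abel
  rwa [hid] at hconj

theorem PosDef.dotProduct_mulVec_mulVec_le_trace_sq_mul [DecidableEq n] {A D : Matrix n n ℝ}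
    (hA : A.PosDef) (hD : D.PosSemidef) (v : n → ℝ) :
    D *ᵥ v ⬝ᵥ A *ᵥ (D *ᵥ v) ≤ (D * A).trace ^ 2 * (v ⬝ᵥ A⁻¹ *ᵥ v) := by
  obtain ⟨B, rfl⟩ := hA.posSemidef.exists_eq_transpose_mul_self
  have hB : IsUnit B := by
    rw [isUnit_iff_isUnit_det, isUnit_iff_ne_zero]
    have := hA.det_pos.ne'
    rw [det_mul, det_transpose] at this
    exact left_ne_zero_of_mul this
  have := hB.invertible
  obtain ⟨y, rfl⟩ : ∃ y, v = Bᵀ *ᵥ y := ⟨(Bᵀ)⁻¹ *ᵥ v, by simp [mulVec_mulVec]⟩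
  have hN : (B * D * Bᵀ).PosSemidef := by simpa using hD.mul_mul_conjTranspose_same B
  have hlhs : D *ᵥ (Bᵀ *ᵥ y) ⬝ᵥ (Bᵀ * B) *ᵥ (D *ᵥ (Bᵀ *ᵥ y))
      = (B * D * Bᵀ) *ᵥ y ⬝ᵥ (B * D * Bᵀ) *ᵥ y := by
    rw [dotProduct_transpose_mul_self_mulVec, mulVec_mulVec, mulVec_mulVec, Matrix.mul_assoc]
  have hrhs : Bᵀ *ᵥ y ⬝ᵥ (Bᵀ * B)⁻¹ *ᵥ (Bᵀ *ᵥ y) = y ⬝ᵥ y := by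
    rw [dotProduct_comm, dotProduct_mulVec, vecMul_transpose, mulVec_mulVec, mulVec_mulVec,
      Matrix.mul_inv_rev, Matrix.mul_assoc, Matrix.mul_assoc, inv_mul_of_invertible,
      Matrix.mul_one, mul_inv_of_invertible, one_mulVec]
  rw [hlhs, hrhs, ← Matrix.mul_assoc, trace_mul_cycle]
  exact hN.mulVec_dotProduct_mulVec_le_trace_sq_mul y

end Matrix

section

variable {d : ℕ}

theorem sigmaA_eq_trace_sub {A G : Matrix (Fin d) (Fin d) ℝ} (hA : IsUnit A) :
    sigmaA A G = (G * A⁻¹).trace - d := by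
  have := hA.invertible
  simp [sigmaA, Matrix.sub_mul, trace_sub]

theorem trace_inv_sub_inv_mul_le_sigmaA {A G : Matrix (Fin d) (Fin d) ℝ} (hA : A.PosDef)
    (hGA : (G - A).PosSemidef) : ((A⁻¹ - G⁻¹) * A).trace ≤ sigmaA A G := by
  have := hA.isUnit.invertible
  have := (hA.of_posSemidef_sub hGA).isUnit.invertible
  have hsplit : ((G - A) * (A⁻¹ - G⁻¹)).trace = sigmaA A G - ((A⁻¹ - G⁻¹) * A).trace := by
    simp only [sigmaA, Matrix.mul_sub, Matrix.sub_mul, trace_sub, mul_inv_of_invertible,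
      inv_mul_of_invertible, trace_mul_comm A G⁻¹]
  linarith [hGA.trace_mul_nonneg (hA.posSemidef_inv_sub_inv hGA)]

theorem lambdaF_newton_step_le {A G : Matrix (Fin d) (Fin d) ℝ} (hA : A.PosDef)
    (hGA : (G - A).PosSemidef) (b x : Fin d → ℝ) :
    lambdaF A b (x - G⁻¹ *ᵥ (A *ᵥ x - b)) ≤ sigmaA A G * lambdaF A b x := by
  have := hA.isUnit.invertible
  set D := A⁻¹ - G⁻¹
  set g := A *ᵥ x - b with hg
  have hD : D.PosSemidef := hA.posSemidef_inv_sub_inv hGA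
  have hgrad : A *ᵥ (x - G⁻¹ *ᵥ g) - b = A *ᵥ (D *ᵥ g) := by
    rw [mulVec_mulVec, Matrix.mul_sub, mul_inv_of_invertible, sub_mulVec, one_mulVec, mulVec_sub,
      mulVec_mulVec, sub_right_comm, ← hg]
  have hnorm : A *ᵥ (D *ᵥ g) ⬝ᵥ A⁻¹ *ᵥ (A *ᵥ (D *ᵥ g)) = D *ᵥ g ⬝ᵥ A *ᵥ (D *ᵥ g) := by
    rw [mulVec_mulVec (D *ᵥ g) A⁻¹ A, inv_mul_of_invertible, one_mulVec, dotProduct_comm]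
  have htrace_nonneg : 0 ≤ (D * A).trace := hD.trace_mul_nonneg hA.posSemidef
  unfold lambdaF
  rw [hgrad, hnorm]
  calc √(D *ᵥ g ⬝ᵥ A *ᵥ (D *ᵥ g)) ≤ √((D * A).trace ^ 2 * (g ⬝ᵥ A⁻¹ *ᵥ g)) :=
        Real.sqrt_le_sqrt (hA.dotProduct_mulVec_mulVec_le_trace_sq_mul hD g)
    _ = (D * A).trace * √(g ⬝ᵥ A⁻¹ *ᵥ g) := by
        rw [Real.sqrt_mul (sq_nonneg _), Real.sqrt_sq htrace_nonneg]
    _ ≤ sigmaA A G * √(g ⬝ᵥ A⁻¹ *ᵥ g) :=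
        mul_le_mul_of_nonneg_right (trace_inv_sub_inv_mul_le_sigmaA hA hGA) (Real.sqrt_nonneg _)

theorem BFGS_eq_of_isSymm {G A : Matrix (Fin d) (Fin d) ℝ} (hG : G.IsSymm) (hA : A.IsSymm)
    {u : Fin d → ℝ} (hu : u ≠ 0) :
    BFGS G A u = G - (u ⬝ᵥ G *ᵥ u)⁻¹ • vecMulVec (G *ᵥ u) (G *ᵥ u)
      + (u ⬝ᵥ A *ᵥ u)⁻¹ • vecMulVec (A *ᵥ u) (A *ᵥ u) := by
  rw [BFGS, if_neg hu, ← mulVec_transpose, ← mulVec_transpose, hG.eq, hA.eq]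

theorem sigmaA_BFGS {G A : Matrix (Fin d) (Fin d) ℝ} (hG : G.IsSymm) (hA : A.PosDef)
    {u : Fin d → ℝ} (hu : u ≠ 0) :
    sigmaA A (BFGS G A u) = sigmaA A G - G *ᵥ u ⬝ᵥ A⁻¹ *ᵥ (G *ᵥ u) / (u ⬝ᵥ G *ᵥ u) + 1 := by
  have := hA.isUnit.invertible
  have hq : u ⬝ᵥ A *ᵥ u ≠ 0 := (hA.dotProduct_mulVec_pos hu).ne'
  rw [BFGS_eq_of_isSymm hG (isHermitian_iff_isSymm.mp hA.isHermitian) hu]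
  simp only [sigmaA, sub_add_eq_add_sub, Matrix.sub_mul, Matrix.add_mul, trace_sub, trace_add,
    Matrix.smul_mul, trace_smul, trace_mul_comm _ A⁻¹, mul_vecMulVec, trace_vecMulVec,
    mulVec_mulVec, inv_mul_of_invertible, one_mulVec, smul_eq_mul]
  rw [inv_mul_cancel₀ hq, dotProduct_comm ((A⁻¹ * G) *ᵥ u), div_eq_inv_mul]
  ring

theorem BFGS_sub_posSemidef {G A : Matrix (Fin d) (Fin d) ℝ} (hA : A.PosDef)
    (hGA : (G - A).PosSemidef) (u : Fin d → ℝ) : (BFGS G A u - A).PosSemidef := by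
  rcases eq_or_ne u 0 with rfl | hu
  · simpa [BFGS] using hGA
  have hG := hA.of_posSemidef_sub hGA
  have hAs : A.IsSymm := isHermitian_iff_isSymm.mp hA.isHermitian
  have hGs : G.IsSymm := isHermitian_iff_isSymm.mp hG.isHermitian
  have ha : 0 < u ⬝ᵥ G *ᵥ u := by simpa using hG.dotProduct_mulVec_pos hu
  have hq : 0 < u ⬝ᵥ A *ᵥ u := by simpa using hA.dotProduct_mulVec_pos hu
  rw [BFGS_eq_of_isSymm hGs hAs hu]
  refine .of_dotProduct_mulVec_nonneg (isHermitian_iff_isSymm.mpr ?_) fun v => ?_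
  · simp [IsSymm, hGs.eq, hAs.eq]
  have hkey := hGA.dotProduct_mulVec_nonneg (v - ((G *ᵥ u ⬝ᵥ v) / (u ⬝ᵥ G *ᵥ u)) • u)
  simp only [star_trivial, sub_mulVec, add_mulVec, smul_mulVec, vecMulVec_mulVec, op_smul_eq_smul,
    mulVec_sub, mulVec_smul, dotProduct_sub, dotProduct_add, dotProduct_smul, sub_dotProduct,
    smul_dotProduct, smul_eq_mul] at hkey ⊢
  rw [hGs.dotProduct_mulVec u v, hAs.dotProduct_mulVec u v, dotProduct_comm v (G *ᵥ u),
    dotProduct_comm v (A *ᵥ u)] at *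
  generalize u ⬝ᵥ G *ᵥ u = a, u ⬝ᵥ A *ᵥ u = q, G *ᵥ u ⬝ᵥ v = c, A *ᵥ u ⬝ᵥ v = p at *
  have hsplit : v ⬝ᵥ G *ᵥ v - a⁻¹ * (c * c) + q⁻¹ * (p * p) - v ⬝ᵥ A *ᵥ v
      = (v ⬝ᵥ G *ᵥ v - c / a * c - (v ⬝ᵥ A *ᵥ v - c / a * p)
        - c / a * (c - c / a * a - (p - c / a * q))) + q * (p / q - c / a) ^ 2 := by
    field_simp
    ring
  rw [hsplit]
  exact add_nonneg hkey (by positivity)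

theorem sigmaA_BFGS_greedy_le {A G L : Matrix (Fin d) (Fin d) ℝ} (hA : A.PosDef)
    (hG : G.PosDef) (hLG : Lᵀ * L = G⁻¹) {i₀ : Fin d}
    (hgreedy : ∀ j : Fin d,
      Pi.single j 1 ⬝ᵥ (((L⁻¹)ᵀ * A⁻¹ * L⁻¹) *ᵥ Pi.single j 1) ≤
        Pi.single i₀ 1 ⬝ᵥ (((L⁻¹)ᵀ * A⁻¹ * L⁻¹) *ᵥ Pi.single i₀ 1)) :
    sigmaA A (BFGS G A (Lᵀ *ᵥ Pi.single i₀ 1)) ≤ (1 - 1 / (d : ℝ)) * sigmaA A G := by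
  have := hG.isUnit.invertible
  have hGs : G.IsSymm := isHermitian_iff_isSymm.mp hG.isHermitian
  have hGL : G * Lᵀ * L = 1 := by rw [Matrix.mul_assoc, hLG, mul_inv_of_invertible]
  have := invertibleOfLeftInverse L (G * Lᵀ) hGL
  have hLinv : L⁻¹ = G * Lᵀ := inv_eq_left_inv hGL
  set e : Fin d → ℝ := Pi.single i₀ 1
  set H := (L⁻¹)ᵀ * A⁻¹ * L⁻¹
  have hGu : G *ᵥ (Lᵀ *ᵥ e) = L⁻¹ *ᵥ e := by rw [mulVec_mulVec, hLinv]
  have huGu : Lᵀ *ᵥ e ⬝ᵥ G *ᵥ (Lᵀ *ᵥ e) = 1 := by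
    rw [hGu, dotProduct_comm, dotProduct_mulVec, vecMul_transpose, mulVec_mulVec,
      mul_inv_of_invertible, one_mulVec]
    simp [e]
  have hu : Lᵀ *ᵥ e ≠ 0 := fun h => by simp [h] at huGu
  have hHdiag : G *ᵥ (Lᵀ *ᵥ e) ⬝ᵥ A⁻¹ *ᵥ (G *ᵥ (Lᵀ *ᵥ e)) = H i₀ i₀ := by
    have hdiag : H i₀ i₀ = e ⬝ᵥ H *ᵥ e := by simp [e]
    rw [hdiag, hGu, ← mulVec_mulVec, ← mulVec_mulVec, dotProduct_mulVec e, vecMul_transpose]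
  have htrace : H.trace = (G * A⁻¹).trace := by
    rw [trace_mul_cycle, transpose_nonsing_inv, ← Matrix.mul_inv_rev, hLG,
      inv_inv_of_invertible]
  have htrace_le : H.trace ≤ d * H i₀ i₀ := by
    simpa using trace_le_card_mul_of_diag_le (M := H) (i := i₀) fun j => by
      simpa [e] using hgreedy j
  have hd : (0 : ℝ) < d := by exact_mod_cast i₀.pos
  rw [sigmaA_BFGS hGs hA hu, huGu, div_one, hHdiag, sigmaA_eq_trace_sub hA.isUnit, ← htrace]
  have hratio : H.trace / d ≤ H i₀ i₀ := by rw [div_le_iff₀ hd]; linarith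
  have hfactor : (1 - 1 / (d : ℝ)) * (H.trace - d) = H.trace - d - H.trace / d + 1 := by
    field_simp
    ring
  linarith

end

theorem greedy_BFGS_quadratic_minimization_general
    {d : ℕ} {A : Matrix (Fin d) (Fin d) ℝ} (hA : A.PosDef)
    (b : Fin d → ℝ)
    {G₀ : Matrix (Fin d) (Fin d) ℝ} (hG₀ : (G₀ - A).PosSemidef)
    (x : ℕ → Fin d → ℝ) (G : ℕ → Matrix (Fin d) (Fin d) ℝ)
    (Lm : ℕ → Matrix (Fin d) (Fin d) ℝ) (i : ℕ → Fin d)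
    (hGinit : G 0 = G₀)
    (hxrec : ∀ k, x (k + 1) = x k - (G k)⁻¹ *ᵥ (A *ᵥ x k - b))
    (hLG : ∀ k, (Lm k)ᵀ * Lm k = (G k)⁻¹)
    (hgreedy : ∀ k, ∀ j : Fin d,
      Pi.single j 1 ⬝ᵥ ((((Lm k)⁻¹)ᵀ * A⁻¹ * (Lm k)⁻¹) *ᵥ Pi.single j 1) ≤
        Pi.single (i k) 1 ⬝ᵥ ((((Lm k)⁻¹)ᵀ * A⁻¹ * (Lm k)⁻¹) *ᵥ Pi.single (i k) 1))
    (hGrec : ∀ k, G (k + 1) = BFGS (G k) A ((Lm k)ᵀ *ᵥ Pi.single (i k) 1)) :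
    ∀ k : ℕ,
      lambdaF A b (x (k + 1)) ≤ (1 - 1 / (d : ℝ)) ^ k * sigmaA A G₀ * lambdaF A b (x k) := by
  have hrate : 0 ≤ 1 - 1 / (d : ℝ) :=
    sub_nonneg.mpr (div_le_one_of_le₀ (by exact_mod_cast (i 0).pos) (Nat.cast_nonneg d))
  have hGk : ∀ k, (G k - A).PosSemidef ∧
      sigmaA A (G k) ≤ (1 - 1 / (d : ℝ)) ^ k * sigmaA A G₀ := by
    intro k
    induction k with
    | zero => simpa [hGinit] using hG₀
    | succ k ih =>
      obtain ⟨hGA, hσ⟩ := ih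
      rw [hGrec k]
      refine ⟨BFGS_sub_posSemidef hA hGA _, ?_⟩
      calc _ ≤ (1 - 1 / (d : ℝ)) * sigmaA A (G k) :=
            sigmaA_BFGS_greedy_le hA (hA.of_posSemidef_sub hGA) (hLG k) (hgreedy k)
        _ ≤ (1 - 1 / (d : ℝ)) * ((1 - 1 / (d : ℝ)) ^ k * sigmaA A G₀) :=
            mul_le_mul_of_nonneg_left hσ hrate
        _ = (1 - 1 / (d : ℝ)) ^ (k + 1) * sigmaA A G₀ := by ring
  intro k
  obtain ⟨hGA, hσ⟩ := hGk k
  calc lambdaF A b (x (k + 1)) ≤ sigmaA A (G k) * lambdaF A b (x k) := by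
        rw [hxrec k]
        exact lambdaF_newton_step_le hA hGA b (x k)
    _ ≤ _ := mul_le_mul_of_nonneg_right hσ (Real.sqrt_nonneg _)

/-- Greedy scaled BFGS method for quadratic minimization:
`λ_f(x_{k+1}) ≤ (1 - 1/d)^k σ_A(G_0) λ_f(x_k)`. -/
theorem greedy_BFGS_quadratic_minimization
    {d : ℕ} {A : Matrix (Fin d) (Fin d) ℝ} (hA : A.PosDef) (hAsymm : A.IsSymm)
    (b : Fin d → ℝ)
    {G₀ : Matrix (Fin d) (Fin d) ℝ} (hG₀symm : G₀.IsSymm) (hG₀ : (G₀ - A).PosSemidef)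
    (x : ℕ → Fin d → ℝ) (G : ℕ → Matrix (Fin d) (Fin d) ℝ)
    (Lm : ℕ → Matrix (Fin d) (Fin d) ℝ) (i : ℕ → Fin d)
    (hGinit : G 0 = G₀)
    (hxrec : ∀ k, x (k + 1) = x k - (G k)⁻¹ *ᵥ (A *ᵥ x k - b))
    (hLinv : ∀ k, IsUnit (Lm k))
    (hLG : ∀ k, (Lm k)ᵀ * Lm k = (G k)⁻¹)
    (hgreedy : ∀ k, ∀ j : Fin d,
      Pi.single j 1 ⬝ᵥ ((((Lm k)⁻¹)ᵀ * A⁻¹ * (Lm k)⁻¹) *ᵥ Pi.single j 1) ≤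
        Pi.single (i k) 1 ⬝ᵥ ((((Lm k)⁻¹)ᵀ * A⁻¹ * (Lm k)⁻¹) *ᵥ Pi.single (i k) 1))
    (hGrec : ∀ k, G (k + 1) = BFGS (G k) A ((Lm k)ᵀ *ᵥ Pi.single (i k) 1)) :
    ∀ k : ℕ,
      lambdaF A b (x (k + 1)) ≤ (1 - 1 / (d : ℝ)) ^ k * sigmaA A G₀ * lambdaF A b (x k) :=
  greedy_BFGS_quadratic_minimization_general hA b hG₀ x G Lm i hGinit hxrec hLG hgreedy hGrec
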